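/- (Case n = 1 of the paper's non-splitting example.) Let k be a field, Λ a finite-dimensional k-algebra, and p a simple projective finitely generated left Λ-module which is not injective. Then the torsion class add(p) is non-splitting: there exists a finitely generated Λ-module m such that every short exact sequence 0 → u →θ m → v → 0 with u ∈ add(p) and Hom_Λ(p, v) = 0 is non-split, i.e. the monomorphism θ admits no retraction m → u. -/
import Mathlib


/-- `N` belongs to `add p`: `N` is (isomorphic to) a direct summand of a finite
direct sum `p^{⊕ d}` of copies of `p`. -/
def MemAdd (Λ : Type*) [Ring Λ] (p : Type*) [AddCommGroup p] [Module Λ p]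
    (N : Type*) [AddCommGroup N] [Module Λ N] : Prop :=
  ∃ (d : ℕ) (s : N →ₗ[Λ] (Fin d → p)) (r : (Fin d → p) →ₗ[Λ] N),
    r ∘ₗ s = LinearMap.id

/-- Case `n = 1` of the non-splitting example: if `p` is a simple projective
non-injective module over a finite-dimensional algebra `Λ`, then the torsion
class `add p` is non-splitting: there is a finitely generated module `m` such
that every short exact sequence `0 → u →θ m → v → 0` with `u ∈ add p` and
`Hom(p, v) = 0` is non-split, i.e. `θ` admits no retraction. -/
theorem add_simple_projective_nonsplitting
    (k : Type) [Field k] (Λ : Type) [Ring Λ] [Algebra k Λ] [FiniteDimensional k Λ]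
    (p : Type) [AddCommGroup p] [Module Λ p] [Module.Finite Λ p]
    (hsimple : IsSimpleModule Λ p) (hproj : Module.Projective Λ p)
    (hnotinj : ¬ Module.Injective Λ p) :
    ∃ m : ModuleCat.{0} Λ, Module.Finite Λ m ∧
      ∀ (u v : Type) [AddCommGroup u] [Module Λ u] [AddCommGroup v] [Module Λ v]
        (θ : u →ₗ[Λ] m) (π : (m : Type) →ₗ[Λ] v),
        Function.Injective θ → Function.Surjective π → Function.Exact θ π →
        MemAdd Λ p u → (∀ f : p →ₗ[Λ] v, f = 0) →
        ¬ (∃ r : (m : Type) →ₗ[Λ] u, r ∘ₗ θ = LinearMap.id) := by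
  classical
  haveI := hsimple
  -- `p` does not satisfy Baer's criterion
  have hnb : ¬ Module.Baer Λ p := fun h => hnotinj h.injective
  unfold Module.Baer at hnb
  push_neg at hnb
  obtain ⟨I, g, hg⟩ := hnb
  -- the pushout module m = (p × Λ) / W
  let ι : (I : Type) →ₗ[Λ] p × Λ := LinearMap.prod g (-(Submodule.subtype I))
  let W : Submodule Λ (p × Λ) := LinearMap.range ι
  have hfin : Module.Finite Λ ((p × Λ) ⧸ W) :=
    Module.Finite.of_surjective W.mkQ (Submodule.mkQ_surjective W)
  refine ⟨ModuleCat.of Λ ((p × Λ) ⧸ W), hfin, ?_⟩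
  intro u v _ _ _ _ θ π hθ hπ hex hu hv hsplit
  obtain ⟨r, hr⟩ := hsplit
  obtain ⟨d, s, r', hr'⟩ := hu
  -- the canonical non-split mono p → m
  let θ₀ : p →ₗ[Λ] (p × Λ) ⧸ W := W.mkQ ∘ₗ LinearMap.inl Λ p Λ
  have hθ₀ : Function.Injective θ₀ := by
    rw [← LinearMap.ker_eq_bot, Submodule.eq_bot_iff]
    intro a ha
    have hmem : ((a, 0) : p × Λ) ∈ W := by
      simpa [θ₀, Submodule.Quotient.mk_eq_zero] using ha
    obtain ⟨x, hx⟩ := hmem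
    have h2 : -(x : Λ) = 0 := congrArg Prod.snd hx
    have hx0 : x = 0 := by ext; simpa using h2
    have h1 : g x = a := congrArg Prod.fst hx
    rw [hx0] at h1
    simpa using h1.symm
  -- θ₀ factors through u
  have hmemrange : ∀ a : p, θ₀ a ∈ LinearMap.range θ := by
    intro a
    have h0 : π ∘ₗ θ₀ = 0 := hv _
    have : π (θ₀ a) = 0 := by
      simpa using DFunLike.congr_fun h0 a
    exact (hex (θ₀ a)).mp this
  let φ : p →ₗ[Λ] u :=
    (LinearEquiv.ofInjective θ hθ).symm.toLinearMap ∘ₗ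
      θ₀.codRestrict (LinearMap.range θ) hmemrange
  have hφ : ∀ a, θ (φ a) = θ₀ a := by
    intro a
    show θ ((LinearEquiv.ofInjective θ hθ).symm ⟨θ₀ a, hmemrange a⟩) = θ₀ a
    exact LinearEquiv.ofInjective_symm_apply (f := θ) (h := hθ) ⟨θ₀ a, hmemrange a⟩
  have hφinj : Function.Injective φ := by
    intro a b hab
    apply hθ₀
    rw [← hφ a, ← hφ b, hab]
  -- e : p → p^d is injective
  let e : p →ₗ[Λ] (Fin d → p) := s ∘ₗ φ
  have hsinj : Function.Injective s := by
    intro a b hab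
    have := DFunLike.congr_fun hr' a
    have hb := DFunLike.congr_fun hr' b
    simp only [LinearMap.coe_comp, Function.comp_apply, LinearMap.id_coe, id_eq] at this hb
    rw [← this, ← hb, hab]
  have he : Function.Injective e := hsinj.comp hφinj
  -- p^d is semisimple, so e splits
  haveI hsemi : IsSemisimpleModule Λ (Fin d → p) := by
    refine isSemisimpleModule_of_isSemisimpleModule_submodule'
      (p := fun i : Fin d => LinearMap.range (LinearMap.single Λ (fun _ : Fin d => p) i))
      (fun i => IsSemisimpleModule.range _) ?_
    simp_rw [LinearMap.range_eq_map, Submodule.iSup_map_single, Submodule.pi_top]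
  obtain ⟨c, hc⟩ := exists_isCompl (LinearMap.range e)
  let ρ : (Fin d → p) →ₗ[Λ] p :=
    (LinearEquiv.ofInjective e he).symm.toLinearMap ∘ₗ
      Submodule.linearProjOfIsCompl _ c hc
  have hρ : ∀ a, ρ (e a) = a := by
    intro a
    have h1 : Submodule.linearProjOfIsCompl _ c hc
        ((LinearEquiv.ofInjective e he a : LinearMap.range e) : Fin d → p)
        = LinearEquiv.ofInjective e he a :=
      Submodule.linearProjOfIsCompl_apply_left hc _
    have h2 : ((LinearEquiv.ofInjective e he a : LinearMap.range e) : Fin d → p) = e a := rfl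
    simp only [ρ, LinearMap.coe_comp, Function.comp_apply, LinearEquiv.coe_coe]
    rw [← h2, h1, LinearEquiv.symm_apply_apply]
  -- σ is a retraction of θ₀
  let σ : ((p × Λ) ⧸ W) →ₗ[Λ] p := ρ ∘ₗ s ∘ₗ r
  have hσ : ∀ a, σ (θ₀ a) = a := by
    intro a
    have hrθ : r (θ₀ a) = φ a := by
      rw [← hφ a]; simpa using DFunLike.congr_fun hr (φ a)
    calc σ (θ₀ a) = ρ (s (r (θ₀ a))) := rfl
      _ = ρ (s (φ a)) := congrArg (fun z => ρ (s z)) hrθ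
      _ = a := hρ a
  -- that contradicts the failure of Baer's criterion
  let h' : Λ →ₗ[Λ] p := σ ∘ₗ W.mkQ ∘ₗ LinearMap.inr Λ p Λ
  obtain ⟨x, mem, hne⟩ := hg h'
  apply hne
  have hkey : W.mkQ (0, x) = W.mkQ (g ⟨x, mem⟩, 0) := by
    rw [Submodule.mkQ_apply, Submodule.mkQ_apply, Submodule.Quotient.eq]
    have : ((0, x) : p × Λ) - (g ⟨x, mem⟩, 0) = -ι ⟨x, mem⟩ := by
      simp [ι, Prod.ext_iff]
    rw [this]
    exact neg_mem (LinearMap.mem_range_self ι ⟨x, mem⟩)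
  have : h' x = σ (θ₀ (g ⟨x, mem⟩)) := by
    simp only [h', LinearMap.coe_comp, Function.comp_apply, LinearMap.inr_apply]
    rw [show ((0 : p), x) = ((0, x) : p × Λ) from rfl] at hkey
    rw [hkey]
    rfl
  rw [this, hσ]
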